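/- arXiv:2509.07883 — 3 statements merged into one kernel-verified Lean document; each statement's English description precedes it below -/
import Mathlib

section
/- Let T be a triangulation of a convex m-gon (m ≥ 4) and let a ≺ b ≺ c ≺ d be four cyclically ordered vertices. Then T contains either an arc xy with a ≺ b ≼ x ≺ c ≺ d ≼ y, or an arc xy with a ≼ x ≺ b ≺ c ≼ y ≺ d. -/
namespace CyclicTri

variable {m : ℕ}

/-- Position of `v` relative to base point `a` in the cyclic order on `ZMod m`. -/
def pos (a v : ZMod m) : ℕ := (v - a).val

/-- `a ≺ b ≺ c` in the cyclic order. -/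
def Cyc3 (a b c : ZMod m) : Prop := 0 < pos a b ∧ pos a b < pos a c

/-- `a ≺ b ≺ c ≺ d` in the cyclic order. -/
def Cyc4 (a b c d : ZMod m) : Prop :=
  0 < pos a b ∧ pos a b < pos a c ∧ pos a c < pos a d

/-- The arcs `xy` and `x'y'` cross: their endpoints interleave cyclically. -/
def Cross (x y x' y' : ZMod m) : Prop := Cyc4 x x' y y' ∨ Cyc4 x' x y' y

/-- `xy` is a diagonal of the polygon: the endpoints are distinct and non-adjacent. -/
def Diag (x y : ZMod m) : Prop := x ≠ y ∧ y ≠ x + 1 ∧ x ≠ y + 1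

/-- `A` is (the symmetrised set of arcs of) a triangulation of the convex `m`-gon:
a maximal set of pairwise non-crossing diagonals. -/
def IsTriangulation (A : Set (ZMod m × ZMod m)) : Prop :=
  (∀ x y, (x, y) ∈ A → (y, x) ∈ A) ∧
  (∀ x y, (x, y) ∈ A → Diag x y) ∧
  (∀ x y x' y', (x, y) ∈ A → (x', y') ∈ A → ¬ Cross x y x' y') ∧
  (∀ x y, Diag x y → (∀ x' y', (x', y') ∈ A → ¬ Cross x y x' y') → (x, y) ∈ A)

/-- There is an arc `xy` of `A` with `a ≺ b ≼ x ≺ c ≺ d ≼ y` (the `+1` case of `χ_T`). -/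
def PosCase (A : Set (ZMod m × ZMod m)) (a b c d : ZMod m) : Prop :=
  ∃ x y, (x, y) ∈ A ∧ 0 < pos a b ∧ pos a b ≤ pos a x ∧ pos a x < pos a c ∧
    pos a c < pos a d ∧ pos a d ≤ pos a y

/-- There is an arc `xy` of `A` with `a ≼ x ≺ b ≺ c ≼ y ≺ d` (the `-1` case of `χ_T`). -/
def NegCase (A : Set (ZMod m × ZMod m)) (a b c d : ZMod m) : Prop :=
  ∃ x y, (x, y) ∈ A ∧ pos a x < pos a b ∧ pos a b < pos a c ∧ pos a c ≤ pos a y ∧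
    pos a y < pos a d

open Classical in
/-- The chirotope `χ_T` on cyclically ordered tuples `a ≺ b ≺ c ≺ d`. -/
noncomputable def chiCyc (A : Set (ZMod m × ZMod m)) (a b c d : ZMod m) : ℤ :=
  if PosCase A a b c d then 1 else if NegCase A a b c d then -1 else 0

/-!
Cut the polygon open at `a`, so that vertices become positions `0 < b < c < d < m` on a line.
Call a chord `st` (with `s < t`) uncrossed if no arc of `T` crosses it: these are exactly the
arcs of `T` and the sides of the polygon. Among uncrossed chords with `s < b` and `d ≤ t` (the
side `0 (m-1)` is one) take a shortest one. The uncrossed chords `sw`, `wt` with `w` maximal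
such that `sw` is uncrossed bound the triangle of `T` below `st`. If `w ∈ [b, c)` then `wt` is
an arc of the first kind, if `w ∈ [c, d)` then `sw` is an arc of the second kind, and otherwise
`sw` or `wt` is a shorter chord of the same type.
-/

/-- Crossing of the chords `ij` and `kl`, for `i < j` and `k < l` on a line. -/
def LinCross (i j k l : ℕ) : Prop := (i < k ∧ k < j ∧ j < l) ∨ (k < i ∧ i < l ∧ l < j)

def IsUncrossed (R : ℕ → ℕ → Prop) (s t : ℕ) : Prop := ∀ k l, R k l → ¬ LinCross s t k l

/-- A triangulation of the polygon with vertices `0, …, m - 1` on a line: its arcs are the pairs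
`R i j` with `i < j` (no other pair crosses anything), and `0 (m - 1)` is a side. -/
structure IsLinearTriangulation (m : ℕ) (R : ℕ → ℕ → Prop) : Prop where
  lt_bound : ∀ i j, R i j → j < m
  uncrossed : ∀ i j, R i j → IsUncrossed R i j
  maximal : ∀ s t, s + 2 ≤ t → t < m → (0 < s ∨ t + 1 < m) → IsUncrossed R s t → R s t

lemma isUncrossed_succ (R : ℕ → ℕ → Prop) (s : ℕ) : IsUncrossed R s (s + 1) := by
  intro k l _ h
  unfold LinCross at h
  omega

namespace IsLinearTriangulation

variable {R : ℕ → ℕ → Prop} (hR : IsLinearTriangulation m R)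
include hR

lemma isUncrossed_zero_pred : IsUncrossed R 0 (m - 1) := by
  intro k l hkl h
  have := hR.lt_bound k l hkl
  unfold LinCross at h
  omega

lemma exists_apex {s t : ℕ} (hst : s + 2 ≤ t) (hU : IsUncrossed R s t) :
    ∃ w, s < w ∧ w < t ∧ IsUncrossed R s w ∧ IsUncrossed R w t := by
  classical
  let P w := s < w ∧ IsUncrossed R s w
  have hP : P (Nat.findGreatest P (t - 1)) :=
    Nat.findGreatest_spec (m := s + 1) (by omega) ⟨by omega, isUncrossed_succ R s⟩
  have hwt : Nat.findGreatest P (t - 1) < t := (Nat.findGreatest_le _).trans_lt (by omega)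
  refine ⟨_, hP.1, hwt, hP.2, fun k l hkl hcross => ?_⟩
  rcases hcross with ⟨hwk, hkt, htl⟩ | ⟨hkw, hwl, hlt⟩
  · exact hU k l hkl (Or.inl ⟨by omega, hkt, htl⟩)
  · rcases lt_trichotomy k s with hks | rfl | hsk
    · exact hU k l hkl (Or.inr ⟨hks, by omega, hlt⟩)
    · exact Nat.findGreatest_is_greatest hwl (by omega) ⟨by omega, hR.uncrossed _ _ hkl⟩
    · exact hP.2 k l hkl (Or.inl ⟨hsk, hkw, hwl⟩)

theorem not_isUncrossed_of_encloses {b c d : ℕ} (hbc : b < c) (hcd : c < d)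
    (h : ¬ ∃ x y, R x y ∧ ((b ≤ x ∧ x < c ∧ d ≤ y) ∨ (x < b ∧ c ≤ y ∧ y < d)))
    (s t : ℕ) (hs : s < b) (ht : d ≤ t) (htm : t < m) : ¬ IsUncrossed R s t := by
  intro hU
  obtain ⟨w, hsw, hwt, hUsw, hUwt⟩ := hR.exists_apex (by omega) hU
  by_cases hwb : w < b
  · exact not_isUncrossed_of_encloses hbc hcd h w t hwb ht htm hUwt
  by_cases hwc : w < c
  · exact h ⟨w, t, hR.maximal w t (by omega) htm (by omega) hUwt, Or.inl ⟨by omega, hwc, ht⟩⟩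
  by_cases hwd : w < d
  · exact h ⟨s, w, hR.maximal s w (by omega) (by omega) (by omega) hUsw,
      Or.inr ⟨hs, by omega, hwd⟩⟩
  · exact not_isUncrossed_of_encloses hbc hcd h s w hs (by omega) (by omega) hUsw
termination_by t - s

theorem exists_arc {b c d : ℕ} (hb : 0 < b) (hbc : b < c) (hcd : c < d) (hd : d < m) :
    ∃ x y, R x y ∧ ((b ≤ x ∧ x < c ∧ d ≤ y) ∨ (x < b ∧ c ≤ y ∧ y < d)) := by
  by_contra h
  exact hR.not_isUncrossed_of_encloses hbc hcd h 0 (m - 1) hb (by omega) (by omega)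
    hR.isUncrossed_zero_pred

end IsLinearTriangulation

lemma pos_add_natCast (a : ZMod m) {i : ℕ} (hi : i < m) : pos a (a + i) = i := by
  simp [pos, ZMod.val_natCast_of_lt hi]

section Positions

variable [NeZero m]

lemma pos_lt (a v : ZMod m) : pos a v < m := ZMod.val_lt _

lemma pos_add_pos_eq_or (a x y : ZMod m) :
    pos x y + pos a x = pos a y ∨ pos x y + pos a x = pos a y + m := by
  have hsum : y - x + (x - a) = y - a := by ring
  rcases lt_or_ge (pos x y + pos a x) m with h | h
  · exact Or.inl (by rw [pos, pos, ← ZMod.val_add_of_lt h, hsum, pos])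
  · exact Or.inr (by rw [pos, pos, ZMod.val_add_val_of_le h, hsum, pos])

lemma pos_add_one (a v : ZMod m) : pos a (v + 1) = (pos a v + 1) % m := by
  have h : v + 1 - a = ((pos a v + 1 : ℕ) : ZMod m) := by
    push_cast [pos, ZMod.natCast_zmod_val]
    ring
  rw [pos, h, ZMod.val_natCast]

lemma diag_of_pos {a x y : ZMod m} (h : pos a x + 2 ≤ pos a y)
    (h' : 0 < pos a x ∨ pos a y + 1 < m) : Diag x y := by
  have hy := pos_lt a y
  refine ⟨fun e => by subst e; omega, fun e => ?_, fun e => ?_⟩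
  · have := pos_add_one a x
    rw [← e, Nat.mod_eq_of_lt (by omega)] at this
    omega
  · have := pos_add_one a y
    rw [← e] at this
    rcases Nat.lt_or_ge (pos a y + 1) m with hlt | hge
    · rw [Nat.mod_eq_of_lt hlt] at this
      omega
    · rw [show pos a y + 1 = m by omega, Nat.mod_self] at this
      omega

lemma cyc4_of_pos_lt {a x y z w : ZMod m} (h₁ : pos a x < pos a y) (h₂ : pos a y < pos a z)
    (h₃ : pos a z < pos a w) : Cyc4 x y z w := by
  have := pos_add_pos_eq_or a x y
  have := pos_add_pos_eq_or a x z
  have := pos_add_pos_eq_or a x w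
  have := pos_lt x y
  have := pos_lt x z
  have := pos_lt x w
  have := pos_lt a w
  unfold Cyc4
  omega

lemma Cyc4.rotate {x y z w : ZMod m} (h : Cyc4 x y z w) : Cyc4 y z w x := by
  obtain ⟨h₁, h₂, h₃⟩ := h
  have := pos_add_pos_eq_or x y z
  have := pos_add_pos_eq_or x y w
  have := pos_add_pos_eq_or x y x
  have := pos_lt y x
  have := pos_lt y z
  have := pos_lt y w
  have := pos_lt x w
  have hxx : pos x x = 0 := by simp [pos]
  refine ⟨?_, ?_, ?_⟩ <;> omega

lemma Cyc4.pos_separates {a x u y v : ZMod m} (h : Cyc4 x u y v) (hxy : pos a x < pos a y) :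
    pos a x < pos a u ∧ pos a u < pos a y ∧ (pos a v < pos a x ∨ pos a y < pos a v) := by
  obtain ⟨h₁, h₂, h₃⟩ := h
  have := pos_add_pos_eq_or a x u
  have := pos_add_pos_eq_or a x y
  have := pos_add_pos_eq_or a x v
  have := pos_lt x v
  have := pos_lt a u
  have := pos_lt a y
  have := pos_lt a v
  omega

lemma Cross.pos_separates {a x y u v : ZMod m} (h : Cross x y u v) (hxy : pos a x < pos a y) :
    (pos a x < pos a u ∧ pos a u < pos a y ∧ (pos a v < pos a x ∨ pos a y < pos a v)) ∨
    (pos a x < pos a v ∧ pos a v < pos a y ∧ (pos a u < pos a x ∨ pos a y < pos a u)) :=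
  h.imp (·.pos_separates hxy) (·.rotate.pos_separates hxy)

def posArcs (A : Set (ZMod m × ZMod m)) (a : ZMod m) (i j : ℕ) : Prop :=
  ∃ x y, (x, y) ∈ A ∧ pos a x = i ∧ pos a y = j

theorem isLinearTriangulation_posArcs {A : Set (ZMod m × ZMod m)} (hT : IsTriangulation A)
    (a : ZMod m) : IsLinearTriangulation m (posArcs A a) := by
  obtain ⟨hsymm, -, hnc, hmax⟩ := hT
  refine ⟨fun _ _ ⟨_, y, _, _, hy⟩ => hy ▸ pos_lt a y, ?_, ?_⟩
  · rintro i j ⟨x, y, hxy, rfl, rfl⟩ k l ⟨x', y', hxy', rfl, rfl⟩ (h | h)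
    · exact hnc x y x' y' hxy hxy' (Or.inl (cyc4_of_pos_lt h.1 h.2.1 h.2.2))
    · exact hnc x y x' y' hxy hxy' (Or.inr (cyc4_of_pos_lt h.1 h.2.1 h.2.2))
  · intro s t hst ht hside hU
    have hs : pos a (a + s) = s := pos_add_natCast a (by omega)
    have ht' : pos a (a + t) = t := pos_add_natCast a ht
    have hsep : ∀ u v, (u, v) ∈ A → s < pos a u → pos a u < t →
        pos a v < s ∨ t < pos a v → False := by
      intro u v huv h₁ h₂ h₃
      rcases h₃ with h₃ | h₃
      · exact hU _ _ ⟨v, u, hsymm u v huv, rfl, rfl⟩ (Or.inr ⟨h₃, h₁, h₂⟩)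
      · exact hU _ _ ⟨u, v, huv, rfl, rfl⟩ (Or.inl ⟨h₁, h₂, h₃⟩)
    refine ⟨a + s, a + t, hmax _ _ (diag_of_pos (a := a) (by omega) (by omega)) ?_, hs, ht'⟩
    intro u v huv hcross
    rcases Cross.pos_separates (a := a) hcross (by omega) with ⟨h₁, h₂, h₃⟩ | ⟨h₁, h₂, h₃⟩
    · exact hsep u v huv (by omega) (by omega) (by omega)
    · exact hsep v u (hsymm u v huv) (by omega) (by omega) (by omega)

end Positions

end CyclicTri

open CyclicTri in
/-- A triangulation `T` of a convex `m`-gon (`m ≥ 4`) contains either an arc `xy`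
with `a ≺ b ≼ x ≺ c ≺ d ≼ y` or an arc `xy` with `a ≼ x ≺ b ≺ c ≼ y ≺ d`. -/
theorem stmt_1 (m : ℕ) (hm : 4 ≤ m) (A : Set (ZMod m × ZMod m))
    (hT : IsTriangulation A) (a b c d : ZMod m) (h : Cyc4 a b c d) :
    PosCase A a b c d ∨ NegCase A a b c d := by
  have : NeZero m := ⟨by omega⟩
  obtain ⟨hab, hbc, hcd⟩ := h
  obtain ⟨_, _, ⟨x, y, hxy, rfl, rfl⟩, hcase⟩ :=
    (isLinearTriangulation_posArcs hT a).exists_arc hab hbc hcd (pos_lt a d)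
  rcases hcase with ⟨h₁, h₂, h₃⟩ | ⟨h₁, h₂, h₃⟩
  · exact Or.inl ⟨x, y, hxy, hab, h₁, h₂, hcd, h₃⟩
  · exact Or.inr ⟨x, y, hxy, h₁, hbc, h₂, h₃⟩
end

section
/- Let T be a triangulation of a convex m-gon and V ⊆ [m] with |V| ≥ 4. Then the restriction of χ_T to 4-tuples from V equals χ_{T_V}, the chirotope of the restricted triangulation T_V. -/
namespace CyclicTri
variable {m : ℕ}

/-- `xy` is a diagonal of the convex polygon with vertex set `V`:
both endpoints are in `V`, and `V` has vertices strictly between them on both sides. -/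
def DiagIn (V : Finset (ZMod m)) (x y : ZMod m) : Prop :=
  x ∈ V ∧ y ∈ V ∧ x ≠ y ∧ (∃ v ∈ V, Cyc3 x v y) ∧ (∃ v ∈ V, Cyc3 y v x)

/-- `A` is a triangulation of the convex polygon with vertex set `V`:
a maximal set of pairwise non-crossing diagonals of `V`. -/
def IsTriangulationOn (V : Finset (ZMod m)) (A : Set (ZMod m × ZMod m)) : Prop :=
  (∀ x y, (x, y) ∈ A → (y, x) ∈ A) ∧
  (∀ x y, (x, y) ∈ A → DiagIn V x y) ∧
  (∀ x y x' y', (x, y) ∈ A → (x', y') ∈ A → ¬ Cross x y x' y') ∧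
  (∀ x y, DiagIn V x y → (∀ x' y', (x', y') ∈ A → ¬ Cross x y x' y') → (x, y) ∈ A)

/-- The part `V_x` of `V` lying in the cyclic half-open segment `(y, x]`. -/
def seg (V : Finset (ZMod m)) (x y : ZMod m) : Finset (ZMod m) :=
  V.filter (fun v => 0 < pos y v ∧ pos y v ≤ pos y x)

/-- The arc `xy` separates `V`: both parts `V_x = V ∩ (y,x]` and `V_y = V ∩ (x,y]`
are nonempty. -/
def Separates (V : Finset (ZMod m)) (x y : ZMod m) : Prop :=
  (seg V x y).Nonempty ∧ (seg V y x).Nonempty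

/-- The restricted set of arcs `T_V = { x^V y^V : xy an arc of T separating V }`,
where `x^V ∈ V_x` is cyclically closest to `x` and `y^V ∈ V_y` is cyclically
closest to `y`. -/
def restrictArcs (V : Finset (ZMod m)) (A : Set (ZMod m × ZMod m)) :
    Set (ZMod m × ZMod m) :=
  { p | ∃ x y, (x, y) ∈ A ∧ Separates V x y ∧
      p.1 ∈ seg V x y ∧ (∀ w ∈ seg V x y, pos y w ≤ pos y p.1) ∧
      p.2 ∈ seg V y x ∧ (∀ w ∈ seg V y x, pos x w ≤ pos x p.2) }

end CyclicTri

/-! A separating arc `xy` of `T` and its restriction `x^V y^V` lie in the same way with respect to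
any four points of `V`: each of `χ_T(a,b,c,d) = ±1` asks for an arc with one endpoint in a cyclic
interval `[p, q)` and the other in `[r, s)`, where `p, q, r, s` run through `a, b, c, d` in cyclic
order. Sliding `x` to the closest vertex `x^V` of `V` never leaves `[p, q)` when `p ∈ V`, since
`p` is one of the candidates; and the slide never crosses a vertex of `V`, so for `q ∈ V` it
cannot enter `[p, q)` from outside. -/

namespace CyclicTri

variable {m : ℕ}

/-- `A` has an arc `xy` with `x` in the cyclic interval `[p, q)` and `y` in `[r, s)`. -/
def HasArcIn (A : Set (ZMod m × ZMod m)) (p q r s : ZMod m) : Prop :=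
  ∃ x y, (x, y) ∈ A ∧ pos p x < pos p q ∧ pos r y < pos r s

lemma mem_seg {V : Finset (ZMod m)} {x y v : ZMod m} :
    v ∈ seg V x y ↔ v ∈ V ∧ 0 < pos y v ∧ pos y v ≤ pos y x :=
  Finset.mem_filter

@[simp]
lemma pos_self (a : ZMod m) : pos a a = 0 := by
  simp [pos]

variable [NeZero m]

/-- Change of base point, packaged so that `omega` can use it. -/
lemma pos_add_pos (o u v : ZMod m) :
    pos o u < m ∧ pos u v < m ∧ pos o v < m ∧
      (pos o u + pos u v = pos o v ∨ pos o u + pos u v = pos o v + m) := by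
  have hsum : (u - o) + (v - u) = v - o := by ring
  refine ⟨ZMod.val_lt _, ZMod.val_lt _, ZMod.val_lt _, ?_⟩
  unfold pos
  rcases lt_or_ge ((u - o).val + (v - u).val) m with h | h
  · exact .inl (by rw [← ZMod.val_add_of_lt h, hsum])
  · exact .inr (by rw [← hsum, ZMod.val_add_val_of_le h])

section CyclicOrder

variable {a b c d x y : ZMod m}

lemma Cyc4.rotate_s4 (h : Cyc4 a b c d) : Cyc4 b c d a := by
  have := pos_add_pos a b c
  have := pos_add_pos a b d
  have := pos_add_pos a b a
  unfold Cyc4 at *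
  simp only [pos_self] at *
  omega

/-- For `a ≺ b ≺ c ≺ d`, a point of `[c, d)` lies outside `[a, b]` and a point of `[a, b)`
lies outside `[c, d]`. -/
lemma Cyc4.pos_lt_pos_of_Ico (h : Cyc4 a b c d) (hx : pos a x < pos a b)
    (hy : pos c y < pos c d) : pos a b < pos a y ∧ pos c d < pos c x := by
  have := pos_add_pos a c y
  have := pos_add_pos a c d
  have := pos_add_pos a c x
  unfold Cyc4 at h
  omega

variable {A : Set (ZMod m × ZMod m)}

lemma posCase_iff : PosCase A a b c d ↔ Cyc4 a b c d ∧ HasArcIn A b c d a := by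
  constructor
  · rintro ⟨x, y, hxy, h0, hbx, hxc, hcd, hdy⟩
    have := pos_add_pos a b x
    have := pos_add_pos a b c
    have := pos_add_pos a d y
    have := pos_add_pos a d a
    simp only [pos_self] at *
    exact ⟨⟨h0, by omega, hcd⟩, x, y, hxy, by omega, by omega⟩
  · rintro ⟨⟨h0, hbc, hcd⟩, x, y, hxy, hx, hy⟩
    have := pos_add_pos a b x
    have := pos_add_pos a b c
    have := pos_add_pos a d y
    have := pos_add_pos a d a
    simp only [pos_self] at *
    exact ⟨x, y, hxy, h0, by omega, by omega, hcd, by omega⟩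

lemma negCase_iff : NegCase A a b c d ↔ Cyc4 a b c d ∧ HasArcIn A a b c d := by
  constructor
  · rintro ⟨x, y, hxy, hxb, hbc, hcy, hyd⟩
    have := pos_add_pos a c y
    have := pos_add_pos a c d
    exact ⟨⟨by omega, hbc, by omega⟩, x, y, hxy, hxb, by omega⟩
  · rintro ⟨⟨-, hbc, hcd⟩, x, y, hxy, hx, hy⟩
    have := pos_add_pos a c y
    have := pos_add_pos a c d
    exact ⟨x, y, hxy, hx, hbc, by omega, by omega⟩

end CyclicOrder

section Restriction

variable {V : Finset (ZMod m)} {A : Set (ZMod m × ZMod m)} {p q r s x y x' : ZMod m}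

lemma exists_closest_mem_Ico (hp : p ∈ V) (hx : pos p x < pos p q)
    (hy : pos p q < pos p y) :
    ∃ x' ∈ seg V x y, (∀ w ∈ seg V x y, pos y w ≤ pos y x') ∧ pos p x' < pos p q := by
  have := pos_add_pos p y p
  have := pos_add_pos p y x
  have hpx : p ∈ seg V x y := mem_seg.2 ⟨hp, by simp only [pos_self] at *; omega⟩
  obtain ⟨x', hx', hmax⟩ := (seg V x y).exists_max_image (pos y) ⟨p, hpx⟩
  refine ⟨x', hx', hmax, ?_⟩
  have := hmax p hpx
  have := (mem_seg.1 hx').2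
  have := pos_add_pos p y x'
  simp only [pos_self] at *
  omega

/-- Between `x^V` and `x` there is no vertex of `V`, so `x^V ∈ [p, q)` forces `x ∈ [p, q)`
as soon as `q ∈ V`. -/
lemma pos_lt_of_closest (hx' : x' ∈ seg V x y) (hmax : ∀ w ∈ seg V x y, pos y w ≤ pos y x')
    (hq : q ∈ V) (h : pos p x' < pos p q) : pos p x < pos p q := by
  by_contra hqx
  have := (mem_seg.1 hx').2
  have := pos_add_pos p x' q
  have := pos_add_pos p x' x
  have := pos_add_pos y x' q
  have := pos_add_pos y x' x
  have hq' : q ∈ seg V x y := mem_seg.2 ⟨hq, by omega⟩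
  have := hmax q hq'
  omega

lemma hasArcIn_restrictArcs_iff (hp : p ∈ V) (hq : q ∈ V) (hr : r ∈ V) (hs : s ∈ V)
    (h : Cyc4 p q r s) : HasArcIn (restrictArcs V A) p q r s ↔ HasArcIn A p q r s := by
  constructor
  · rintro ⟨x', y', ⟨x, y, hxy, -, hx', hxmax, hy', hymax⟩, hpx', hry'⟩
    exact ⟨x, y, hxy, pos_lt_of_closest hx' hxmax hq hpx', pos_lt_of_closest hy' hymax hs hry'⟩
  · rintro ⟨x, y, hxy, hpx, hry⟩
    obtain ⟨hqy, hsx⟩ := h.pos_lt_pos_of_Ico hpx hry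
    obtain ⟨x', hx', hxmax, hpx'⟩ := exists_closest_mem_Ico hp hpx hqy
    obtain ⟨y', hy', hymax, hry'⟩ := exists_closest_mem_Ico hr hry hsx
    exact ⟨x', y', ⟨x, y, hxy, ⟨⟨x', hx'⟩, ⟨y', hy'⟩⟩, hx', hxmax, hy', hymax⟩, hpx', hry'⟩

end Restriction

end CyclicTri

open CyclicTri in
theorem stmt_4_general (m : ℕ) [NeZero m] (A : Set (ZMod m × ZMod m))
    (V : Finset (ZMod m))
    (a b c d : ZMod m) (ha : a ∈ V) (hb : b ∈ V) (hc : c ∈ V) (hd : d ∈ V) :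
    chiCyc A a b c d = chiCyc (restrictArcs V A) a b c d := by
  by_cases h : Cyc4 a b c d
  · have hpos := hasArcIn_restrictArcs_iff (A := A) hb hc hd ha h.rotate_s4
    have hneg := hasArcIn_restrictArcs_iff (A := A) ha hb hc hd h
    unfold chiCyc
    rw [posCase_iff, posCase_iff, negCase_iff, negCase_iff, hpos, hneg]
  · simp only [chiCyc, posCase_iff, negCase_iff, h, false_and, if_false]

open CyclicTri in
/-- For a triangulation `T` of the `m`-gon and `V ⊆ [m]` with `|V| ≥ 4`, the
restriction of `χ_T` to 4-tuples from `V` equals `χ_{T_V}`. -/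
theorem stmt_4 (m : ℕ) (hm : 4 ≤ m) [NeZero m] (A : Set (ZMod m × ZMod m))
    (hT : IsTriangulationOn (Finset.univ : Finset (ZMod m)) A)
    (V : Finset (ZMod m)) (hV : 4 ≤ V.card)
    (a b c d : ZMod m) (ha : a ∈ V) (hb : b ∈ V) (hc : c ∈ V) (hd : d ∈ V)
    (h : Cyc4 a b c d) :
    chiCyc A a b c d = chiCyc (restrictArcs V A) a b c d :=
  stmt_4_general m A V a b c d ha hb hc hd
end

section
/- With the combinatorial model of the derived category of A_n, let P, Q, R be cyclic pairs in [n+3] with integer lifts P', Q', R'. Then the three Hom-conditions p'₀−1 < q'₀ < p'₁−1 < q'₁ < p'₀+n+2, q'₀−1 < r'₀ < q'₁−1 < r'₁ < q'₀+n+2, and p'₀−1 < r'₀ < p'₁−1 < r'₁ < p'₀+n+2 hold simultaneously if and only if the single chain p'₀ − 1 ≤ q'₀ − 1 < r'₀ < p'₁ − 1 ≤ q'₁ − 1 < r'₁ < p'₀ + n + 2 holds. -/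
/-- In the combinatorial model of `D^b(kA_n)`, for integer indices satisfying the
index constraints, the conjunction of the three pairwise Hom-condition chains is
equivalent to the single seven-term chain
`p₀ - 1 ≤ q₀ - 1 < r₀ < p₁ - 1 ≤ q₁ - 1 < r₁ < p₀ + n + 2`. -/
theorem stmt_13 (n : ℕ) (P0 P1 Q0 Q1 R0 R1 : ℤ)
    (hP : P0 + 2 ≤ P1 ∧ P1 ≤ P0 + n + 1)
    (hQ : Q0 + 2 ≤ Q1 ∧ Q1 ≤ Q0 + n + 1)
    (hR : R0 + 2 ≤ R1 ∧ R1 ≤ R0 + n + 1) :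
    ((P0 - 1 < Q0 ∧ Q0 < P1 - 1 ∧ P1 - 1 < Q1 ∧ Q1 < P0 + n + 2) ∧
     (Q0 - 1 < R0 ∧ R0 < Q1 - 1 ∧ Q1 - 1 < R1 ∧ R1 < Q0 + n + 2) ∧
     (P0 - 1 < R0 ∧ R0 < P1 - 1 ∧ P1 - 1 < R1 ∧ R1 < P0 + n + 2)) ↔
    (P0 - 1 ≤ Q0 - 1 ∧ Q0 - 1 < R0 ∧ R0 < P1 - 1 ∧ P1 - 1 ≤ Q1 - 1 ∧
      Q1 - 1 < R1 ∧ R1 < P0 + n + 2) := by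
  constructor <;> intro h <;> omega
end
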